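/- For a harmonic map h (with target hyperbolic, i.e., ψ_{u\bar u} = (1/2)e^ψ) with h_z nonvanishing, the Gaussian curvature of the conformal metric e^φ|dz|² with e^φ = e^{ψ∘h} h_z \overline{h_z} satisfies K_φ := −2 φ_{z\bar z} e^{−φ} = |h_{\bar z}|²/|h_z|² − 1. In particular, if additionally the Jacobian |h_z|² − |h_{\bar z}|² never vanishes, then K_φ never vanishes. -/

import Mathlib

open Complex ComplexConjugate

/-- Wirtinger derivative ∂/∂z. -/
noncomputable def wd (f : ℂ → ℂ) (z : ℂ) : ℂ :=
  (1/2 : ℂ) * (fderiv ℝ f z 1 - Complex.I * fderiv ℝ f z Complex.I)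

/-- Wirtinger derivative ∂/∂z̄. -/
noncomputable def wdb (f : ℂ → ℂ) (z : ℂ) : ℂ :=
  (1/2 : ℂ) * (fderiv ℝ f z 1 + Complex.I * fderiv ℝ f z Complex.I)
lemma wd_congr {f g : ℂ → ℂ} {z : ℂ} (hfg : f =ᶠ[nhds z] g) : wd f z = wd g z := by
  unfold wd; rw [hfg.fderiv_eq]

lemma wdb_congr {f g : ℂ → ℂ} {z : ℂ} (hfg : f =ᶠ[nhds z] g) : wdb f z = wdb g z := by
  unfold wdb; rw [hfg.fderiv_eq]

lemma clm_apply_eq (L : ℂ →L[ℝ] ℂ) (v : ℂ) :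
    L v = (1/2 : ℂ)*(L 1 - Complex.I*L Complex.I)*v
        + (1/2 : ℂ)*(L 1 + Complex.I*L Complex.I)*(conj v) := by
  obtain ⟨x, y⟩ := v
  have hv : (⟨x, y⟩ : ℂ) = (x : ℂ) + (y : ℂ) * Complex.I := Complex.mk_eq_add_mul_I x y
  have h1 : L ⟨x, y⟩ = (x : ℂ) * L 1 + (y : ℂ) * L Complex.I := by
    rw [hv, show ((x : ℂ) + (y : ℂ) * Complex.I) = x • (1 : ℂ) + y • (Complex.I) by
      simp [Complex.real_smul]]
    rw [L.map_add, L.map_smul, L.map_smul]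
    simp [Complex.real_smul]
  have h2 : conj (⟨x, y⟩ : ℂ) = (x : ℂ) - (y : ℂ) * Complex.I := by
    rw [hv]; simp [Complex.ext_iff]
  rw [h1, h2, hv]
  have hI := Complex.I_sq
  ring_nf
  rw [Complex.I_sq]
  ring


lemma fderiv_one_eq {f : ℂ → ℂ} {z : ℂ} :
    fderiv ℝ f z 1 = wd f z + wdb f z := by
  unfold wd wdb; ring

lemma fderiv_I_eq {f : ℂ → ℂ} {z : ℂ} :
    fderiv ℝ f z Complex.I = Complex.I * (wd f z - wdb f z) := by
  unfold wd wdb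
  ring_nf
  rw [Complex.I_sq]
  ring

lemma wd_comp {g f : ℂ → ℂ} {z : ℂ} (hg : DifferentiableAt ℝ g (f z))
    (hf : DifferentiableAt ℝ f z) :
    wd (fun w => g (f w)) z = wd g (f z) * wd f z + wdb g (f z) * conj (wdb f z) := by
  have hc : fderiv ℝ (fun w => g (f w)) z = (fderiv ℝ g (f z)).comp (fderiv ℝ f z) :=
    fderiv_comp (x := z) hg hf
  unfold wd wdb
  rw [hc]
  simp only [ContinuousLinearMap.comp_apply]
  rw [clm_apply_eq (fderiv ℝ g (f z)) (fderiv ℝ f z 1),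
      clm_apply_eq (fderiv ℝ g (f z)) (fderiv ℝ f z Complex.I),
      fderiv_one_eq (f := f), fderiv_I_eq (f := f)]
  simp only [map_add, map_mul, map_sub, map_div₀, map_one, map_ofNat, Complex.conj_I]
  ring_nf

lemma wdb_comp {g f : ℂ → ℂ} {z : ℂ} (hg : DifferentiableAt ℝ g (f z))
    (hf : DifferentiableAt ℝ f z) :
    wdb (fun w => g (f w)) z = wd g (f z) * wdb f z + wdb g (f z) * conj (wd f z) := by
  have hc : fderiv ℝ (fun w => g (f w)) z = (fderiv ℝ g (f z)).comp (fderiv ℝ f z) :=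
    fderiv_comp (x := z) hg hf
  unfold wd wdb
  rw [hc]
  simp only [ContinuousLinearMap.comp_apply]
  rw [clm_apply_eq (fderiv ℝ g (f z)) (fderiv ℝ f z 1),
      clm_apply_eq (fderiv ℝ g (f z)) (fderiv ℝ f z Complex.I),
      fderiv_one_eq (f := f), fderiv_I_eq (f := f)]
  simp only [map_add, map_mul, map_sub, map_div₀, map_one, map_ofNat, Complex.conj_I]
  ring_nf

lemma wd_mul {f g : ℂ → ℂ} {z : ℂ} (hf : DifferentiableAt ℝ f z)
    (hg : DifferentiableAt ℝ g z) :
    wd (fun w => f w * g w) z = wd f z * g z + f z * wd g z := by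
  unfold wd
  rw [fderiv_fun_mul hf hg]
  simp only [ContinuousLinearMap.add_apply, ContinuousLinearMap.smul_apply, smul_eq_mul]
  ring

lemma wdb_mul {f g : ℂ → ℂ} {z : ℂ} (hf : DifferentiableAt ℝ f z)
    (hg : DifferentiableAt ℝ g z) :
    wdb (fun w => f w * g w) z = wdb f z * g z + f z * wdb g z := by
  unfold wdb
  rw [fderiv_fun_mul hf hg]
  simp only [ContinuousLinearMap.add_apply, ContinuousLinearMap.smul_apply, smul_eq_mul]
  ring

lemma wd_conj {f : ℂ → ℂ} {z : ℂ} (hf : DifferentiableAt ℝ f z) :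
    wd (fun w => conj (f w)) z = conj (wdb f z) := by
  have hc : fderiv ℝ (fun w => conj (f w)) z
      = (Complex.conjCLE : ℂ →L[ℝ] ℂ).comp (fderiv ℝ f z) := by
    exact (Complex.conjCLE.toContinuousLinearMap.hasFDerivAt.comp z hf.hasFDerivAt).fderiv
  unfold wd wdb
  rw [hc]
  simp only [ContinuousLinearMap.comp_apply]
  have h1 : (Complex.conjCLE : ℂ →L[ℝ] ℂ) (fderiv ℝ f z 1) = conj (fderiv ℝ f z 1) := rfl
  have h2 : (Complex.conjCLE : ℂ →L[ℝ] ℂ) (fderiv ℝ f z Complex.I)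
      = conj (fderiv ℝ f z Complex.I) := rfl
  rw [h1, h2]
  simp only [map_add, map_mul, map_div₀, map_one, map_ofNat, Complex.conj_I]
  ring

lemma wdb_conj {f : ℂ → ℂ} {z : ℂ} (hf : DifferentiableAt ℝ f z) :
    wdb (fun w => conj (f w)) z = conj (wd f z) := by
  have hc : fderiv ℝ (fun w => conj (f w)) z
      = (Complex.conjCLE : ℂ →L[ℝ] ℂ).comp (fderiv ℝ f z) := by
    exact (Complex.conjCLE.toContinuousLinearMap.hasFDerivAt.comp z hf.hasFDerivAt).fderiv
  unfold wd wdb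
  rw [hc]
  simp only [ContinuousLinearMap.comp_apply]
  have h1 : (Complex.conjCLE : ℂ →L[ℝ] ℂ) (fderiv ℝ f z 1) = conj (fderiv ℝ f z 1) := rfl
  have h2 : (Complex.conjCLE : ℂ →L[ℝ] ℂ) (fderiv ℝ f z Complex.I)
      = conj (fderiv ℝ f z Complex.I) := rfl
  rw [h1, h2]
  simp only [map_add, map_sub, map_mul, map_div₀, map_one, map_ofNat, Complex.conj_I]
  ring

/-- For a ℂ-differentiable (holomorphic) `g`, `∂g = deriv g` and `∂̄g = 0`. -/
lemma wd_holo {g : ℂ → ℂ} {u : ℂ} (hg : DifferentiableAt ℂ g u) :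
    wd g u = deriv g u ∧ wdb g u = 0 := by
  have hr : fderiv ℝ g u = (fderiv ℂ g u).restrictScalars ℝ :=
    hg.fderiv_restrictScalars ℝ
  have h1 : fderiv ℝ g u 1 = deriv g u := by
    rw [hr]; simp [fderiv_apply_one_eq_deriv]
  have hI : fderiv ℝ g u Complex.I = deriv g u * Complex.I := by
    rw [hr]
    have : (fderiv ℂ g u) Complex.I = Complex.I • (fderiv ℂ g u) 1 := by
      rw [← ContinuousLinearMap.map_smul]; norm_num
    simpa [smul_eq_mul, mul_comm] using this
  constructor
  · unfold wd; rw [h1, hI]; ring_nf; rw [Complex.I_sq]; ring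
  · unfold wdb; rw [h1, hI]; ring_nf; rw [Complex.I_sq]; ring

lemma contDiff_wd {f : ℂ → ℂ} (hf : ContDiff ℝ (⊤ : ℕ∞) f) : ContDiff ℝ (⊤ : ℕ∞) (wd f) := by
  have hc : ContDiff ℝ (⊤ : ℕ∞) (fderiv ℝ f) := hf.fderiv_right (by simp)
  exact contDiff_const.mul ((hc.clm_apply contDiff_const).sub
    (contDiff_const.mul (hc.clm_apply contDiff_const)))

lemma contDiff_wdb {f : ℂ → ℂ} (hf : ContDiff ℝ (⊤ : ℕ∞) f) : ContDiff ℝ (⊤ : ℕ∞) (wdb f) := by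
  have hc : ContDiff ℝ (⊤ : ℕ∞) (fderiv ℝ f) := hf.fderiv_right (by simp)
  exact contDiff_const.mul ((hc.clm_apply contDiff_const).add
    (contDiff_const.mul (hc.clm_apply contDiff_const)))

lemma contDiff_conj_comp {f : ℂ → ℂ} (hf : ContDiff ℝ (⊤ : ℕ∞) f) :
    ContDiff ℝ (⊤ : ℕ∞) (fun w => conj (f w)) :=
  Complex.conjCLE.toContinuousLinearMap.contDiff.comp hf

lemma fderiv_apply_const {f : ℂ → ℂ} {z v : ℂ} (hf : ContDiff ℝ (⊤ : ℕ∞) f) :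
    fderiv ℝ (fun w => fderiv ℝ f w v) z = (fderiv ℝ (fderiv ℝ f) z).flip v := by
  have hc : DifferentiableAt ℝ (fderiv ℝ f) z :=
    (hf.fderiv_right (m := (⊤ : ℕ∞)) (by simp)).differentiable (by simp) z
  rw [fderiv_clm_apply hc (differentiableAt_const v)]
  simp

lemma fderiv_wd_apply {f : ℂ → ℂ} {z v : ℂ} (hf : ContDiff ℝ (⊤ : ℕ∞) f) :
    fderiv ℝ (wd f) z v
      = (1/2 : ℂ) * (fderiv ℝ (fderiv ℝ f) z v 1
          - Complex.I * fderiv ℝ (fderiv ℝ f) z v Complex.I) := by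
  have hc : DifferentiableAt ℝ (fderiv ℝ f) z :=
    (hf.fderiv_right (m := (⊤ : ℕ∞)) (by simp)).differentiable (by simp) z
  have hA : DifferentiableAt ℝ (fun w => fderiv ℝ f w 1) z :=
    hc.clm_apply (differentiableAt_const _)
  have hB : DifferentiableAt ℝ (fun w => fderiv ℝ f w Complex.I) z :=
    hc.clm_apply (differentiableAt_const _)
  have : wd f = fun w => (1/2 : ℂ) * (fderiv ℝ f w 1 - Complex.I * fderiv ℝ f w Complex.I) := rfl
  rw [this, fderiv_const_mul (hA.fun_sub (hB.const_mul _)) _, fderiv_fun_sub hA (hB.const_mul _),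
    fderiv_const_mul hB _, fderiv_apply_const hf, fderiv_apply_const hf]
  simp

lemma fderiv_wdb_apply {f : ℂ → ℂ} {z v : ℂ} (hf : ContDiff ℝ (⊤ : ℕ∞) f) :
    fderiv ℝ (wdb f) z v
      = (1/2 : ℂ) * (fderiv ℝ (fderiv ℝ f) z v 1
          + Complex.I * fderiv ℝ (fderiv ℝ f) z v Complex.I) := by
  have hc : DifferentiableAt ℝ (fderiv ℝ f) z :=
    (hf.fderiv_right (m := (⊤ : ℕ∞)) (by simp)).differentiable (by simp) z
  have hA : DifferentiableAt ℝ (fun w => fderiv ℝ f w 1) z :=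
    hc.clm_apply (differentiableAt_const _)
  have hB : DifferentiableAt ℝ (fun w => fderiv ℝ f w Complex.I) z :=
    hc.clm_apply (differentiableAt_const _)
  have : wdb f = fun w => (1/2 : ℂ) * (fderiv ℝ f w 1 + Complex.I * fderiv ℝ f w Complex.I) := rfl
  rw [this, fderiv_const_mul (hA.fun_add (hB.const_mul _)) _, fderiv_fun_add hA (hB.const_mul _),
    fderiv_const_mul hB _, fderiv_apply_const hf, fderiv_apply_const hf]
  simp
  ring

/-- Mixed Wirtinger derivatives commute for smooth functions. -/
lemma wdb_wd_comm {f : ℂ → ℂ} {z : ℂ} (hf : ContDiff ℝ (⊤ : ℕ∞) f) :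
    wdb (wd f) z = wd (wdb f) z := by
  have hsymm : ∀ v w : ℂ, fderiv ℝ (fderiv ℝ f) z v w = fderiv ℝ (fderiv ℝ f) z w v := by
    intro v w
    exact second_derivative_symmetric
      (fun y => ((hf.differentiable (by simp)) y).hasFDerivAt)
      (((hf.fderiv_right (m := (⊤ : ℕ∞)) (by simp)).differentiable (by simp) z).hasFDerivAt) v w
  have e1 : wdb (wd f) z
      = (1/2 : ℂ) * (fderiv ℝ (wd f) z 1 + Complex.I * fderiv ℝ (wd f) z Complex.I) := rfl
  have e2 : wd (wdb f) z
      = (1/2 : ℂ) * (fderiv ℝ (wdb f) z 1 - Complex.I * fderiv ℝ (wdb f) z Complex.I) := rfl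
  rw [e1, e2, fderiv_wd_apply hf, fderiv_wd_apply hf, fderiv_wdb_apply hf, fderiv_wdb_apply hf,
    hsymm Complex.I 1]
  ring

lemma wd_exp_comp {F : ℂ → ℂ} {z : ℂ} (hF : DifferentiableAt ℝ F z) :
    wd (fun w => Complex.exp (F w)) z = Complex.exp (F z) * wd F z := by
  have hg : DifferentiableAt ℂ Complex.exp (F z) := Complex.differentiable_exp _
  have h := wd_holo hg
  rw [wd_comp (hg.restrictScalars ℝ) hF, h.1, h.2, Complex.deriv_exp]
  ring

lemma wdb_inv_comp {F : ℂ → ℂ} {z : ℂ} (hF : DifferentiableAt ℝ F z) (h0 : F z ≠ 0) :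
    wdb (fun w => (F w)⁻¹) z = -(wdb F z) / (F z)^2 := by
  have hg : DifferentiableAt ℂ (fun u : ℂ => u⁻¹) (F z) := differentiableAt_inv h0
  have h := wd_holo hg
  rw [wdb_comp (hg.restrictScalars ℝ) hF, h.1, h.2]
  rw [deriv_inv]
  field_simp
  ring

lemma differentiableAt_inv_comp {F : ℂ → ℂ} {z : ℂ}
    (hF : DifferentiableAt ℝ F z) (h0 : F z ≠ 0) :
    DifferentiableAt ℝ (fun w => (F w)⁻¹) z := by
  have hg : DifferentiableAt ℂ (fun u : ℂ => u⁻¹) (F z) := differentiableAt_inv h0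
  exact (hg.restrictScalars ℝ).comp z hF

lemma wdb_add {f g : ℂ → ℂ} {z : ℂ} (hf : DifferentiableAt ℝ f z)
    (hg : DifferentiableAt ℝ g z) :
    wdb (fun w => f w + g w) z = wdb f z + wdb g z := by
  unfold wdb
  rw [fderiv_fun_add hf hg]
  simp only [ContinuousLinearMap.add_apply]
  ring

lemma wd_neg {f : ℂ → ℂ} {z : ℂ} :
    wd (fun w => -(f w)) z = -(wd f z) := by
  unfold wd
  rw [fderiv_fun_neg]
  simp only [ContinuousLinearMap.neg_apply]
  ring

lemma step1 (U : Set ℂ) (hU : IsOpen U) (h φ : ℂ → ℂ) (ψ : ℂ → ℝ)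
    (hh : ContDiff ℝ (⊤ : ℕ∞) h) (hψ : ContDiff ℝ (⊤ : ℕ∞) ψ) (hφ : ContDiff ℝ (⊤ : ℕ∞) φ)
    (hzne : ∀ z ∈ U, wd h z ≠ 0)
    (harm : ∀ z ∈ U,
      wdb (wd h) z + wd (fun u => (ψ u : ℂ)) (h z) * wd h z * wdb h z = 0)
    (hexp : ∀ z ∈ U,
      Complex.exp (φ z) = Complex.exp (ψ (h z)) * wd h z * conj (wd h z)) :
    ∀ z ∈ U, wd φ z
      = wd (fun u => (ψ u : ℂ)) (h z) * wd h z + wd (wd h) z / wd h z := by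
  intro z hz
  have hΨ : ContDiff ℝ (⊤ : ℕ∞) (fun u => (ψ u : ℂ)) := Complex.ofRealCLM.contDiff.comp hψ
  have dh : DifferentiableAt ℝ h z := hh.differentiable (by simp) z
  have da : DifferentiableAt ℝ (wd h) z := (contDiff_wd hh).differentiable (by simp) z
  have dφ : DifferentiableAt ℝ φ z := hφ.differentiable (by simp) z
  have dΨh : DifferentiableAt ℝ (fun w => ((ψ (h w) : ℂ))) z :=
    (hΨ.comp hh).differentiable (by simp) z
  have dE : DifferentiableAt ℝ (fun w => Complex.exp ((ψ (h w) : ℂ))) z :=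
    ((hΨ.comp hh).cexp.differentiable (by simp)) z
  have dca : DifferentiableAt ℝ (fun w => conj (wd h w)) z :=
    (contDiff_conj_comp (contDiff_wd hh)).differentiable (by simp) z
  have hEq : (fun w => Complex.exp (φ w))
      =ᶠ[nhds z] fun w => Complex.exp ((ψ (h w) : ℂ)) * wd h w * conj (wd h w) :=
    Filter.eventually_of_mem (hU.mem_nhds hz) (fun w hw => hexp w hw)
  have hL := wd_congr hEq
  rw [wd_exp_comp dφ] at hL
  rw [wd_mul (dE.fun_mul da) dca, wd_conj da, wd_mul dE da, wd_exp_comp dΨh,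
    wd_comp ((hΨ.differentiable (by simp)) (h z)) dh] at hL
  -- real-valuedness of ψ : wdb Ψ = conj (wd Ψ)
  have hconjΨ : wdb (fun u => (ψ u : ℂ)) (h z) = conj (wd (fun u => (ψ u : ℂ)) (h z)) := by
    have hfe : (fun v => conj ((ψ v : ℂ))) = (fun u => (ψ u : ℂ)) :=
      funext fun v => Complex.conj_ofReal _
    conv_lhs => rw [← hfe]
    exact wdb_conj ((hΨ.differentiable (by simp)) (h z))
  have hharm : wdb (wd h) z = -(wd (fun u => (ψ u : ℂ)) (h z) * wd h z * wdb h z) :=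
    eq_neg_of_add_eq_zero_left (harm z hz)
  rw [hharm, hconjΨ, hexp z hz] at hL
  have hane : wd h z ≠ 0 := hzne z hz
  have hcane : conj (wd h z) ≠ 0 := by
    simpa using hane
  have hEne : Complex.exp ((ψ (h z) : ℂ)) ≠ 0 := Complex.exp_ne_zero _
  apply mul_left_cancel₀ (show Complex.exp ((ψ (h z) : ℂ)) * wd h z * conj (wd h z) ≠ 0 from
    mul_ne_zero (mul_ne_zero hEne hane) hcane)
  rw [hL]
  simp only [map_neg, map_mul]
  field_simp
  ring

lemma step2 (U V : Set ℂ) (hU : IsOpen U) (h φ : ℂ → ℂ) (ψ : ℂ → ℝ)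
    (hmaps : Set.MapsTo h U V)
    (hh : ContDiff ℝ (⊤ : ℕ∞) h) (hψ : ContDiff ℝ (⊤ : ℕ∞) ψ) (hφ : ContDiff ℝ (⊤ : ℕ∞) φ)
    (hzne : ∀ z ∈ U, wd h z ≠ 0)
    (harm : ∀ z ∈ U,
      wdb (wd h) z + wd (fun u => (ψ u : ℂ)) (h z) * wd h z * wdb h z = 0)
    (liouville : ∀ u ∈ V,
      wdb (wd (fun u => (ψ u : ℂ))) u = (1/2) * Complex.exp (ψ u))
    (hexp : ∀ z ∈ U,
      Complex.exp (φ z) = Complex.exp (ψ (h z)) * wd h z * conj (wd h z)) :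
    ∀ z ∈ U, wdb (wd φ) z = (1/2) * Complex.exp ((ψ (h z) : ℂ))
      * (wd h z * conj (wd h z) - wdb h z * conj (wdb h z)) := by
  intro z hz
  have hΨ : ContDiff ℝ (⊤ : ℕ∞) (fun u => (ψ u : ℂ)) := Complex.ofRealCLM.contDiff.comp hψ
  have hane : wd h z ≠ 0 := hzne z hz
  have dh : DifferentiableAt ℝ h z := hh.differentiable (by simp) z
  have da : DifferentiableAt ℝ (wd h) z := (contDiff_wd hh).differentiable (by simp) z
  have db : DifferentiableAt ℝ (wdb h) z := (contDiff_wdb hh).differentiable (by simp) z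
  have dA : DifferentiableAt ℝ (wd (wd h)) z :=
    (contDiff_wd (contDiff_wd hh)).differentiable (by simp) z
  have dPh : DifferentiableAt ℝ (fun w => wd (fun u => (ψ u : ℂ)) (h w)) z :=
    ((contDiff_wd hΨ).comp hh).differentiable (by simp) z
  have dwdΨ : DifferentiableAt ℝ (wd (fun u => (ψ u : ℂ))) (h z) :=
    (contDiff_wd hΨ).differentiable (by simp) (h z)
  have dinva : DifferentiableAt ℝ (fun w => (wd h w)⁻¹) z :=
    differentiableAt_inv_comp da hane
  have hG : wd φ =ᶠ[nhds z]
      fun w => wd (fun u => (ψ u : ℂ)) (h w) * wd h w + wd (wd h) w * (wd h w)⁻¹ :=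
    Filter.eventually_of_mem (hU.mem_nhds hz) (fun w hw => by
      rw [step1 U hU h φ ψ hh hψ hφ hzne harm hexp w hw, div_eq_mul_inv])
  have hHe : wd (wdb (wd h)) z
      = wd (fun w => -(wd (fun u => (ψ u : ℂ)) (h w) * wd h w * wdb h w)) z :=
    wd_congr (Filter.eventually_of_mem (hU.mem_nhds hz) (fun w hw =>
      eq_neg_of_add_eq_zero_left (harm w hw)))
  have hharm : wdb (wd h) z = -(wd (fun u => (ψ u : ℂ)) (h z) * wd h z * wdb h z) :=
    eq_neg_of_add_eq_zero_left (harm z hz)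
  have hS : wdb (wd (fun u => (ψ u : ℂ))) (h z) = (1/2) * Complex.exp ((ψ (h z) : ℂ)) :=
    liouville (h z) (hmaps hz)
  rw [wdb_congr hG, wdb_add (dPh.fun_mul da) (dA.fun_mul dinva), wdb_mul dPh da, wdb_mul dA dinva,
    wdb_comp dwdΨ dh, wdb_inv_comp da hane, wdb_wd_comm (contDiff_wd hh), hHe, wd_neg,
    wd_mul (dPh.fun_mul da) db, wd_mul dPh da, wd_comp dwdΨ dh, ← wdb_wd_comm hh,
    hharm, hS]
  field_simp
  ring

/-- for a harmonic map `h` (target hyperbolic) with `h_z` nonvanishing,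
the Gaussian curvature `K_φ = −2 φ_{z z̄} e^{−φ}` of `e^φ|dz|²`,
`e^φ = e^{ψ∘h}|h_z|²`, equals `|h_{z̄}|²/|h_z|² − 1`; and if the Jacobian
`|h_z|² − |h_{z̄}|²` never vanishes on `U`, then `K_φ` never vanishes on `U`. -/
theorem gaussian_curvature_formula
    (U V : Set ℂ) (hU : IsOpen U) (hV : IsOpen V) (h φ : ℂ → ℂ) (ψ : ℂ → ℝ)
    (hmaps : Set.MapsTo h U V)
    (hh : ContDiff ℝ (⊤ : ℕ∞) h) (hψ : ContDiff ℝ (⊤ : ℕ∞) ψ) (hφ : ContDiff ℝ (⊤ : ℕ∞) φ)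
    (hzne : ∀ z ∈ U, wd h z ≠ 0)
    (harm : ∀ z ∈ U,
      wdb (wd h) z + wd (fun u => (ψ u : ℂ)) (h z) * wd h z * wdb h z = 0)
    (liouville : ∀ u ∈ V,
      wdb (wd (fun u => (ψ u : ℂ))) u = (1/2) * Complex.exp (ψ u))
    (hexp : ∀ z ∈ U,
      Complex.exp (φ z) = Complex.exp (ψ (h z)) * wd h z * conj (wd h z)) :
    (∀ z ∈ U,
      -2 * wdb (wd φ) z * Complex.exp (-(φ z))
        = (wdb h z * conj (wdb h z)) / (wd h z * conj (wd h z)) - 1) ∧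
    ((∀ z ∈ U, wd h z * conj (wd h z) - wdb h z * conj (wdb h z) ≠ 0) →
      ∀ z ∈ U, -2 * wdb (wd φ) z * Complex.exp (-(φ z)) ≠ 0) := by
  have key : ∀ z ∈ U,
      -2 * wdb (wd φ) z * Complex.exp (-(φ z))
        = (wdb h z * conj (wdb h z)) / (wd h z * conj (wd h z)) - 1 := by
    intro z hz
    have hane : wd h z ≠ 0 := hzne z hz
    have hcane : conj (wd h z) ≠ 0 := by simpa using hane
    have hEne : Complex.exp ((ψ (h z) : ℂ)) ≠ 0 := Complex.exp_ne_zero _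
    rw [step2 U V hU h φ ψ hmaps hh hψ hφ hzne harm liouville hexp z hz,
      Complex.exp_neg, hexp z hz]
    field_simp
    ring
  refine ⟨key, fun hJ z hz => ?_⟩
  rw [key z hz]
  intro heq
  apply hJ z hz
  have hane : wd h z ≠ 0 := hzne z hz
  have hcane : conj (wd h z) ≠ 0 := by simpa using hane
  have h1 : wdb h z * conj (wdb h z) / (wd h z * conj (wd h z)) = 1 := by
    have := sub_eq_zero.mp heq
    exact this
  have h2 : wdb h z * conj (wdb h z) = wd h z * conj (wd h z) :=
    (div_eq_one_iff_eq (mul_ne_zero hane hcane)).mp h1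
  rw [h2, sub_self]
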